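/- Let m be a positive integer, ε ≠ 1 an m-th root of unity in ℂ, D the m×m cyclic-shift permutation matrix, and U(r) the matrix with 1's in row r and 0 elsewhere. Then the vector v_ε = (ε, ε², …, ε^m) satisfies (D − I + U(r))·v_ε = (ε − 1)·v_ε; moreover the all-ones row vector (1,…,1) satisfies (1,…,1)·(D − I + U(r)) = (1,…,1). Hence the eigenvalues of D − I + U(r) are exactly {ε − 1 : ε^m = 1, ε ≠ 1} ∪ {1}. -/

import Mathlib

/-!
The shift `D` multiplies `v_ε` by `ε`, while `U(r)` kills it because `∑ ε^(i+1) = 0`; and each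
column of `D - I + U(r)` sums to `1`. This exhibits the eigenvalues `ε - 1` (for the `m - 1`
roots `ε ≠ 1`) and `1`, which are pairwise distinct since `2` is not a root of unity. Having
found `m` distinct eigenvalues of an `m × m` matrix, there are no others: the characteristic
polynomial has degree `m`.
-/

open Matrix Polynomial

namespace Matrix

variable {n R K : Type*} [Fintype n] [DecidableEq n] [CommRing R] [Field K]

theorem mem_spectrum_of_mulVec_eq_smul {A : Matrix n n R} {μ : R} {v : n → R} (hv : v ≠ 0)
    (h : A *ᵥ v = μ • v) : μ ∈ spectrum R A := by
  refine spectrum.mem_iff.mpr fun hunit => hv (mulVec_injective_of_isUnit hunit ?_)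
  simp only [sub_mulVec, h, Algebra.algebraMap_eq_smul_one, smul_mulVec, one_mulVec, sub_self,
    mulVec_zero]

theorem mem_spectrum_of_vecMul_eq_smul {A : Matrix n n R} {μ : R} {v : n → R} (hv : v ≠ 0)
    (h : v ᵥ* A = μ • v) : μ ∈ spectrum R A := by
  refine spectrum.mem_iff.mpr fun hunit => hv (vecMul_injective_of_isUnit hunit ?_)
  simp only [vecMul_sub, h, Algebra.algebraMap_eq_smul_one, vecMul_smul, vecMul_one, sub_self,
    zero_vecMul, smul_zero]

theorem spectrum_eq_of_subset_of_card_le {A : Matrix n n K} {S : Finset K}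
    (hS : ↑S ⊆ spectrum K A) (hcard : Fintype.card n ≤ S.card) : spectrum K A = S := by
  classical
  have hroots : spectrum K A = A.charpoly.roots.toFinset := by
    ext μ
    simp [mem_spectrum_iff_isRoot_charpoly, A.charpoly_monic.ne_zero]
  have hle : A.charpoly.roots.toFinset.card ≤ S.card :=
    calc A.charpoly.roots.toFinset.card ≤ Multiset.card A.charpoly.roots :=
          Multiset.toFinset_card_le _
      _ ≤ A.charpoly.natDegree := A.charpoly.card_roots'
      _ = Fintype.card n := A.charpoly_natDegree_eq_dim
      _ ≤ S.card := hcard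
  rw [hroots, Finset.coe_inj]
  exact (Finset.eq_of_subset_of_card_le (by rwa [hroots, Finset.coe_subset] at hS) hle).symm

end Matrix

section CyclicShift

variable {R : Type*} [CommRing R] (m : ℕ)

def rowOfOnes (r : Fin m) : Matrix (Fin m) (Fin m) R := of fun i _ => if i = r then 1 else 0

variable {m}

theorem rowOfOnes_mulVec (r : Fin m) (v : Fin m → R) :
    rowOfOnes m r *ᵥ v = Pi.single r (∑ j, v j) := by
  ext i
  by_cases h : i = r <;> simp [rowOfOnes, mulVec, dotProduct, h]

theorem vecMul_rowOfOnes (r : Fin m) (v : Fin m → R) : v ᵥ* rowOfOnes m r = fun _ => v r := by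
  ext j
  simp [rowOfOnes, vecMul, dotProduct]

variable (m) [NeZero m]

def cyclicShift : Matrix (Fin m) (Fin m) R := of fun i j => if j = i + 1 then 1 else 0

variable {m}

theorem cyclicShift_mulVec (v : Fin m → R) : cyclicShift m *ᵥ v = fun i => v (i + 1) := by
  ext i
  simp [cyclicShift, mulVec, dotProduct]

theorem vecMul_cyclicShift (v : Fin m → R) : v ᵥ* cyclicShift m = fun j => v (j - 1) := by
  ext j
  simp_rw [vecMul, dotProduct, cyclicShift, of_apply, eq_comm (a := j), ← eq_sub_iff_add_eq,
    mul_ite, mul_one, mul_zero, Finset.sum_ite_eq', Finset.mem_univ, if_true]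

end CyclicShift

section RootsOfUnity

variable {R : Type*} [CommRing R] {m : ℕ} {ε : R}

theorem sum_pow_val_add_one_eq_zero [IsDomain R] (hε : ε ^ m = 1) (hε1 : ε ≠ 1) :
    ∑ i : Fin m, ε ^ ((i : ℕ) + 1) = 0 := by
  have hgeom : (ε - 1) * ∑ i ∈ Finset.range m, ε ^ i = 0 := by rw [mul_geom_sum, hε, sub_self]
  simp_rw [Fin.sum_univ_eq_sum_range (fun i => ε ^ (i + 1)), pow_succ', ← Finset.mul_sum,
    (mul_eq_zero.mp hgeom).resolve_left (sub_ne_zero.mpr hε1), mul_zero]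

variable [NeZero m]

theorem pow_val_add_one_add_one (hε : ε ^ m = 1) (i : Fin m) :
    ε ^ (((i + 1 : Fin m) : ℕ) + 1) = ε * ε ^ ((i : ℕ) + 1) := by
  have hval : ((i + 1 : Fin m) : ℕ) = ((i : ℕ) + 1) % m := by simp [Fin.val_add]
  rw [hval, pow_succ, ← pow_eq_pow_mod _ hε, mul_comm]

end RootsOfUnity

section ShiftMinusOnePlusRow

variable {R : Type*} [CommRing R] {m : ℕ} [NeZero m]

theorem cyclicShift_sub_one_add_rowOfOnes_mulVec_powers [IsDomain R] (r : Fin m) {ε : R}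
    (hε : ε ^ m = 1) (hε1 : ε ≠ 1) :
    (cyclicShift m - 1 + rowOfOnes m r) *ᵥ (fun i : Fin m => ε ^ ((i : ℕ) + 1))
      = (ε - 1) • fun i : Fin m => ε ^ ((i : ℕ) + 1) := by
  ext i
  simp [add_mulVec, sub_mulVec, cyclicShift_mulVec, rowOfOnes_mulVec,
    pow_val_add_one_add_one hε, sum_pow_val_add_one_eq_zero hε hε1, sub_mul]

theorem ones_vecMul_cyclicShift_sub_one_add_rowOfOnes (r : Fin m) :
    (fun _ => (1 : R)) ᵥ* (cyclicShift m - 1 + rowOfOnes m r) = fun _ => 1 := by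
  ext j
  simp [vecMul_add, vecMul_sub, vecMul_cyclicShift, vecMul_rowOfOnes]

end ShiftMinusOnePlusRow

theorem two_pow_ne_one {m : ℕ} (hm : m ≠ 0) : (2 : ℂ) ^ m ≠ 1 := by
  exact_mod_cast (Nat.one_lt_two_pow hm).ne'

theorem exists_finset_coe_eq_sub_one_rootsOfUnity {m : ℕ} (hm : m ≠ 0) :
    ∃ S : Finset ℂ, (S : Set ℂ) = {z : ℂ | ∃ ε : ℂ, ε ^ m = 1 ∧ ε ≠ 1 ∧ z = ε - 1} ∪ {1} ∧
      S.card = m := by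
  have hm' : 0 < m := Nat.pos_of_ne_zero hm
  have hone : (1 : ℂ) ∉ ((nthRootsFinset m (1 : ℂ)).erase 1).image (· - 1) := by
    simp only [Finset.mem_image, Finset.mem_erase, mem_nthRootsFinset hm', not_exists, not_and]
    rintro ε ⟨-, hε⟩ h
    rw [sub_eq_iff_eq_add.mp h] at hε
    exact two_pow_ne_one hm (by norm_num at hε ⊢; exact hε)
  refine ⟨insert 1 (((nthRootsFinset m (1 : ℂ)).erase 1).image (· - 1)), ?_, ?_⟩
  · ext z
    simp only [Finset.coe_insert, Finset.coe_image, Finset.coe_erase, Set.mem_insert_iff,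
      Set.mem_image, Set.mem_sdiff, Finset.mem_coe, mem_nthRootsFinset hm', Set.mem_singleton_iff,
      Set.mem_union, Set.mem_ofPred_eq]
    grind
  · rw [Finset.card_insert_of_notMem hone, Finset.card_image_of_injective _ sub_left_injective,
      Finset.card_erase_of_mem (one_mem_nthRootsFinset hm'),
      (Complex.isPrimitiveRoot_exp m hm).card_nthRootsFinset, Nat.sub_add_cancel hm']

/-- For the matrix `A = D − I + U(r)` over `ℂ` (`D` the m×m cyclic shift,
`U(r)` the matrix with `1`s in row `r`): for every m-th root of unity `ε ≠ 1`
the vector `(ε, ε², …, ε^m)` is an eigenvector with eigenvalue `ε − 1`;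
the all-ones row vector satisfies `(1,…,1)·A = (1,…,1)`; and the set of
eigenvalues of `A` is exactly `{ε − 1 : ε^m = 1, ε ≠ 1} ∪ {1}`. -/
theorem stmt_4 (m : ℕ) [NeZero m] (r : Fin m)
    (D : Matrix (Fin m) (Fin m) ℂ)
    (hD : D = Matrix.of fun i j => if j = i + 1 then 1 else 0)
    (U : Matrix (Fin m) (Fin m) ℂ)
    (hU : U = Matrix.of fun i _ => if i = r then 1 else 0) :
    (∀ ε : ℂ, ε ^ m = 1 → ε ≠ 1 →
        (D - 1 + U).mulVec (fun i => ε ^ ((i : ℕ) + 1))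
          = (ε - 1) • fun i : Fin m => ε ^ ((i : ℕ) + 1)) ∧
    (Matrix.vecMul (fun _ => (1 : ℂ)) (D - 1 + U) = fun _ => (1 : ℂ)) ∧
    spectrum ℂ (D - 1 + U)
      = {z : ℂ | ∃ ε : ℂ, ε ^ m = 1 ∧ ε ≠ 1 ∧ z = ε - 1} ∪ {1} := by
  obtain rfl : D = cyclicShift m := hD
  obtain rfl : U = rowOfOnes m r := hU
  have heigen := fun ε : ℂ => cyclicShift_sub_one_add_rowOfOnes_mulVec_powers r (ε := ε)
  have hones := ones_vecMul_cyclicShift_sub_one_add_rowOfOnes (R := ℂ) r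
  refine ⟨heigen, hones, ?_⟩
  obtain ⟨S, hS, hcard⟩ := exists_finset_coe_eq_sub_one_rootsOfUnity (NeZero.ne m)
  rw [← hS]
  refine spectrum_eq_of_subset_of_card_le ?_ (by rw [Fintype.card_fin, hcard])
  rw [hS]
  rintro _ (⟨ε, hε, hε1, rfl⟩ | rfl)
  · refine mem_spectrum_of_mulVec_eq_smul (fun h => ?_) (heigen ε hε hε1)
    have hε0 : ε = 0 := by simpa using congrFun h 0
    simp [hε0, NeZero.ne m] at hε
  · exact mem_spectrum_of_vecMul_eq_smul (fun h => one_ne_zero (congrFun h 0))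
      (by rw [hones, one_smul])
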